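/- arXiv:1805.05483 — 4 statements merged into one kernel-verified Lean document; each statement's English description precedes it below -/
import Mathlib

section
/- For a finite simple graph G and a vertex v_i of G of degree d_i, the vertex energy satisfies E_G(v_i) ≤ √(d_i), with equality if and only if the connected component of G containing v_i is a star and v_i is its center. -/
open Matrix Finset

/-- The energy of the vertex `i` of a finite simple graph `G`:
the `(i,i)` entry of `|A| = (A Aᴴ)^{1/2}`, where `A` is the adjacency matrix. -/
noncomputable def vertexEnergy {n : ℕ} (G : SimpleGraph (Fin n)) [DecidableRel G.Adj]
    (i : Fin n) : ℝ :=
  ((Matrix.posSemidef_self_mul_conjTranspose (G.adjMatrix ℝ)).1.eigenvectorUnitary.1 *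
    diagonal ((RCLike.ofReal : ℝ → ℝ) ∘ (√·) ∘ (Matrix.posSemidef_self_mul_conjTranspose (G.adjMatrix ℝ)).1.eigenvalues) *
    (star (Matrix.posSemidef_self_mul_conjTranspose (G.adjMatrix ℝ)).1.eigenvectorUnitary :
      Matrix (Fin n) (Fin n) ℝ)) i i

/-!
Write `S = |A|`, a positive semidefinite matrix with `S² = A²`. Then
`S i i ^ 2 ≤ ∑ j, S j i ^ 2 = (A²) i i = dᵢ`, with equality iff `S` maps `eᵢ` to a multiple
of itself. As `S` is the positive square root of `A²`, this happens iff `A²` does, i.e. iff no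
vertex other than `i` is joined to `i` by a path of length two, i.e. iff the component of `i`
is a star centred at `i`.
-/

open scoped MatrixOrder

namespace Matrix

variable {ι : Type*} [Fintype ι] {S : Matrix ι ι ℝ}

lemma IsSymm.mul_self_apply_self (hS : S.IsSymm) (i : ι) : (S * S) i i = ∑ j, S j i ^ 2 := by
  rw [mul_apply]
  exact sum_congr rfl fun j _ => by rw [hS.apply i j, sq]

lemma IsSymm.sq_apply_self_le (hS : S.IsSymm) (i : ι) : S i i ^ 2 ≤ (S * S) i i :=
  hS.mul_self_apply_self i ▸ single_le_sum (fun j _ => sq_nonneg (S j i)) (mem_univ i)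

lemma IsSymm.dotProduct_mulVec_comm (hS : S.IsSymm) (x y : ι → ℝ) :
    x ⬝ᵥ S *ᵥ y = S *ᵥ x ⬝ᵥ y := by
  rw [dotProduct_mulVec, ← mulVec_transpose, hS.eq]

lemma PosSemidef.mulVec_eq_smul_of_mul_self_mulVec_eq (hS : S.PosSemidef) {c : ℝ} (hc : 0 ≤ c)
    {v : ι → ℝ} (h : (S * S) *ᵥ v = c ^ 2 • v) : S *ᵥ v = c • v := by
  -- `y` is an eigenvector of `S` for the eigenvalue `-c ≤ 0`; positivity (and symmetry if `c = 0`)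
  -- forces `y = 0`.
  set y := S *ᵥ v - c • v
  have hSy : S *ᵥ y = -c • y := by
    simp only [y, mulVec_sub, mulVec_smul, mulVec_mulVec, h]
    module
  have hnonneg : 0 ≤ -c * (y ⬝ᵥ y) := by
    simpa [hSy] using hS.dotProduct_mulVec_nonneg y
  have hyy : y ⬝ᵥ y = -(2 * c) * (y ⬝ᵥ v) := by
    have : y ⬝ᵥ S *ᵥ v = -c * (y ⬝ᵥ v) := by
      rw [(isHermitian_iff_isSymm.1 hS.1).dotProduct_mulVec_comm, hSy, smul_dotProduct,
        smul_eq_mul]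
    simp only [y, dotProduct_sub, dotProduct_smul, smul_eq_mul] at this ⊢
    rw [this]
    ring
  have hy : y = 0 := by
    refine dotProduct_self_eq_zero.1 ?_
    rcases hc.eq_or_lt with rfl | hc
    · simpa using hyy
    · have : 0 ≤ y ⬝ᵥ y := sum_nonneg fun _ _ => mul_self_nonneg _
      nlinarith
  exact sub_eq_zero.1 hy

variable [DecidableEq ι]

lemma mulVec_single_one_eq_smul_iff {α : Type*} [NonAssocSemiring α]
    {M : Matrix ι ι α} {i : ι} {c : α} :
    M *ᵥ Pi.single i 1 = c • Pi.single i 1 ↔ M i i = c ∧ ∀ j ≠ i, M j i = 0 := by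
  rw [mulVec_single_one, funext_iff]
  constructor
  · intro h
    exact ⟨by simpa using h i, fun j hj => by simpa [hj] using h j⟩
  · rintro ⟨rfl, h⟩ j
    by_cases hj : j = i
    · subst hj; simp
    · simp [hj, h j hj]

lemma IsSymm.sq_apply_self_eq_iff (hS : S.IsSymm) (i : ι) :
    S i i ^ 2 = (S * S) i i ↔ ∀ j ≠ i, S j i = 0 := by
  rw [hS.mul_self_apply_self, ← add_sum_erase _ _ (mem_univ i), left_eq_add,
    sum_eq_zero_iff_of_nonneg fun j _ => sq_nonneg _]
  simp

lemma PosSemidef.forall_ne_apply_eq_zero_iff_mul_self (hS : S.PosSemidef) (i : ι) :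
    (∀ j ≠ i, S j i = 0) ↔ ∀ j ≠ i, (S * S) j i = 0 := by
  constructor
  · intro h
    have hS2 : (S * S) *ᵥ Pi.single i 1 = (S i i ^ 2) • Pi.single i 1 := by
      rw [← mulVec_mulVec, mulVec_single_one_eq_smul_iff.2 ⟨rfl, h⟩, mulVec_smul,
        mulVec_single_one_eq_smul_iff.2 ⟨rfl, h⟩, smul_smul, sq]
    exact (mulVec_single_one_eq_smul_iff.1 hS2).2
  · intro h
    have hd : 0 ≤ (S * S) i i :=
      (sq_nonneg _).trans ((isHermitian_iff_isSymm.1 hS.1).sq_apply_self_le i)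
    have hS2 : (S * S) *ᵥ Pi.single i 1 = √((S * S) i i) ^ 2 • Pi.single i 1 := by
      rw [Real.sq_sqrt hd]
      exact mulVec_single_one_eq_smul_iff.2 ⟨rfl, h⟩
    exact (mulVec_single_one_eq_smul_iff.1
      (hS.mulVec_eq_smul_of_mul_self_mulVec_eq (Real.sqrt_nonneg _) hS2)).2

end Matrix

namespace SimpleGraph

variable {V : Type*} {G : SimpleGraph V}

lemma adjMatrix_mul_self_apply_eq_zero_iff {α : Type*} [Fintype V] [DecidableRel G.Adj]
    [NonAssocSemiring α] [CharZero α] {j i : V} :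
    (G.adjMatrix α * G.adjMatrix α) j i = 0 ↔ ∀ w, G.Adj j w → ¬G.Adj w i := by
  simp only [adjMatrix_mul_apply, adjMatrix_apply, sum_boole, Nat.cast_eq_zero, card_eq_zero,
    filter_eq_empty_iff, mem_neighborFinset]

lemma eq_or_adj_of_reachable {i u : V} (h : ∀ j ≠ i, ∀ w, G.Adj j w → ¬G.Adj w i)
    (hu : G.Reachable u i) : u = i ∨ G.Adj u i := by
  obtain ⟨p⟩ := hu
  induction p with
  | nil => exact .inl rfl
  | cons hab p ih =>
    rcases ih h with rfl | hbi
    · exact .inr hab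
    · exact .inl (by_contra fun ha => h _ ha _ hab hbi)

lemma forall_reachable_adj_eq_or_eq_iff {i : V} :
    (∀ u w, G.Reachable i u → G.Adj u w → u = i ∨ w = i) ↔
      ∀ j ≠ i, ∀ w, G.Adj j w → ¬G.Adj w i := by
  constructor
  · intro h j hj w hjw hwi
    obtain rfl := (h j w (hwi.symm.reachable.trans hjw.symm.reachable) hjw).resolve_left hj
    exact G.irrefl hwi
  · intro h u w hiu huw
    refine (eq_or_adj_of_reachable h hiu.symm).imp_right fun hui => by_contra fun hw => ?_
    exact h w hw u huw.symm hui

end SimpleGraph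

lemma vertexEnergy_eq_sqrt_apply {n : ℕ} (G : SimpleGraph (Fin n)) [DecidableRel G.Adj]
    (i : Fin n) : vertexEnergy G i = CFC.sqrt (G.adjMatrix ℝ * (G.adjMatrix ℝ)ᴴ) i i := by
  have hM := posSemidef_self_mul_conjTranspose (G.adjMatrix ℝ)
  rw [CFC.sqrt_eq_real_sqrt _ hM.nonneg, cfcₙ_eq_cfc, hM.1.cfc_eq]
  rfl

theorem stmt_2 {n : ℕ} (G : SimpleGraph (Fin n)) [DecidableRel G.Adj] (i : Fin n) :
    vertexEnergy G i ≤ Real.sqrt (G.degree i) ∧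
    (vertexEnergy G i = Real.sqrt (G.degree i) ↔
      ∀ u w : Fin n, G.Reachable i u → G.Adj u w → u = i ∨ w = i) := by
  have hM := posSemidef_self_mul_conjTranspose (G.adjMatrix ℝ)
  set S := CFC.sqrt (G.adjMatrix ℝ * (G.adjMatrix ℝ)ᴴ)
  have hS : S.PosSemidef := nonneg_iff_posSemidef.1 (CFC.sqrt_nonneg _)
  have hSymm : S.IsSymm := isHermitian_iff_isSymm.1 hS.1
  have hSS : S * S = G.adjMatrix ℝ * G.adjMatrix ℝ := by
    rw [CFC.sqrt_mul_sqrt_self _ hM.nonneg, conjTranspose_eq_transpose_of_trivial,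
      G.transpose_adjMatrix]
  have hdeg : (S * S) i i = G.degree i := hSS ▸ G.adjMatrix_mul_self_apply_self i
  rw [vertexEnergy_eq_sqrt_apply, ← hdeg]
  refine ⟨Real.le_sqrt_of_sq_le (hSymm.sq_apply_self_le i), ?_⟩
  rw [eq_comm, Real.sqrt_eq_iff_eq_sq (hdeg ▸ Nat.cast_nonneg _) hS.diag_nonneg, eq_comm,
    hSymm.sq_apply_self_eq_iff, hS.forall_ne_apply_eq_zero_iff_mul_self, hSS,
    G.forall_reachable_adj_eq_or_eq_iff]
  simp only [SimpleGraph.adjMatrix_mul_self_apply_eq_zero_iff]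
end

section
/- Let G be a finite simple graph of order n with at least one edge and let v_j be a vertex of degree d_j ≥ 1. Then d_j^{3/2} / M_4(G,j)^{1/2} ≤ E_G(v_j), where M_4(G,j) = (A^4)_{jj} is the number of closed walks of length 4 starting and ending at v_j. -/
/-!
Write `B = |A| = (A Aᵀ)^{1/2}`. Since `A` is symmetric, `B² = A²`, so `(B²)_jj = d_j` and
`(B⁴)_jj = M₄(G,j)`, while `E_G(v_j) = B_jj`. For a symmetric matrix `C` the entry `(C^(p+q))_jj`
is the inner product of rows `j` of `C^p` and `C^q`, so Cauchy–Schwarz gives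
`(C^(p+q))_jj² ≤ (C^(2p))_jj (C^(2q))_jj`. Applied to `C = B^{1/2}` with `(p, q) = (1, 3)` and to
`C = B` with `(p, q) = (1, 2)`, this yields `d² ≤ B_jj (B³)_jj` and `(B³)_jj² ≤ d M₄`, whence
`d³ ≤ B_jj² M₄`.
-/

open Matrix Finset

open scoped MatrixOrder

namespace Matrix

variable {ι : Type*} [Fintype ι] [DecidableEq ι]

theorem IsSymm.pow_add_apply_self {C : Matrix ι ι ℝ} (hC : C.IsSymm) (p q : ℕ) (j : ι) :
    (C ^ (p + q)) j j = ∑ k, (C ^ p) j k * (C ^ q) j k := by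
  rw [pow_add, mul_apply]
  refine sum_congr rfl fun k _ => ?_
  rw [← (hC.pow q).apply k j]

theorem IsSymm.sq_pow_add_apply_self_le {C : Matrix ι ι ℝ} (hC : C.IsSymm) (p q : ℕ) (j : ι) :
    (C ^ (p + q)) j j ^ 2 ≤ (C ^ (2 * p)) j j * (C ^ (2 * q)) j j := by
  simp only [two_mul, hC.pow_add_apply_self, ← sq]
  exact sum_mul_sq_le_sq_mul_sq _ _ _

theorem PosSemidef.cfc_sqrt_eq {B : Matrix ι ι ℝ} (hB : B.PosSemidef) :
    hB.1.cfc Real.sqrt = CFC.sqrt B := by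
  rw [CFC.sqrt_eq_real_sqrt B hB.nonneg, cfcₙ_eq_cfc, hB.1.cfc_eq]

theorem PosSemidef.sq_pow_two_apply_self_le {B : Matrix ι ι ℝ} (hB : B.PosSemidef) (j : ι) :
    (B ^ 2) j j ^ 2 ≤ B j j * (B ^ 3) j j := by
  set S := CFC.sqrt B
  have hS : S.IsSymm := (CFC.sqrt_nonneg B).posSemidef.isHermitian
  have hSpow (r : ℕ) : S ^ (2 * r) = B ^ r := by rw [pow_mul, CFC.sq_sqrt B hB.nonneg]
  have h := hS.sq_pow_add_apply_self_le 1 3 j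
  rwa [show 1 + 3 = 2 * 2 from rfl, hSpow, hSpow, hSpow, pow_one] at h

theorem PosSemidef.pow_two_apply_self_cube_le {B : Matrix ι ι ℝ} (hB : B.PosSemidef) (j : ι) :
    (B ^ 2) j j ^ 3 ≤ B j j ^ 2 * (B ^ 4) j j := by
  have h₁ := hB.sq_pow_two_apply_self_le j
  have h₂ : (B ^ 3) j j ^ 2 ≤ (B ^ 2) j j * (B ^ 4) j j :=
    IsSymm.sq_pow_add_apply_self_le hB.isHermitian 1 2 j
  have hM : 0 ≤ (B ^ 4) j j := (hB.pow 4).diag_nonneg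
  rcases (hB.pow 2).diag_nonneg.eq_or_lt with hd0 | hdpos
  · rw [← hd0, zero_pow three_ne_zero]
    positivity
  have h₃ : (B ^ 2) j j * (B ^ 2) j j ^ 3 ≤ (B ^ 2) j j * (B j j ^ 2 * (B ^ 4) j j) :=
    calc (B ^ 2) j j * (B ^ 2) j j ^ 3 = ((B ^ 2) j j ^ 2) ^ 2 := by ring
      _ ≤ (B j j * (B ^ 3) j j) ^ 2 := pow_le_pow_left₀ (sq_nonneg _) h₁ 2
      _ = B j j ^ 2 * (B ^ 3) j j ^ 2 := by ring
      _ ≤ B j j ^ 2 * ((B ^ 2) j j * (B ^ 4) j j) := mul_le_mul_of_nonneg_left h₂ (sq_nonneg _)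
      _ = (B ^ 2) j j * (B j j ^ 2 * (B ^ 4) j j) := by ring
  exact le_of_mul_le_mul_left h₃ hdpos

end Matrix

theorem Real.rpow_three_halves_div_sqrt_le {d e m : ℝ} (hd : 0 ≤ d) (he : 0 ≤ e)
    (h : d ^ 3 ≤ e ^ 2 * m) : d ^ ((3 : ℝ) / 2) / √m ≤ e := by
  have hd' : d ^ ((3 : ℝ) / 2) = √(d ^ 3) := by
    rw [Real.sqrt_eq_rpow, ← Real.rpow_natCast, ← Real.rpow_mul hd]
    norm_num
  refine div_le_of_le_mul₀ (Real.sqrt_nonneg m) he ?_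
  calc d ^ ((3 : ℝ) / 2) = √(d ^ 3) := hd'
    _ ≤ √(e ^ 2 * m) := Real.sqrt_le_sqrt h
    _ = e * √m := by rw [Real.sqrt_mul (sq_nonneg e), Real.sqrt_sq he]

namespace SimpleGraph

variable {n : ℕ} (G : SimpleGraph (Fin n)) [DecidableRel G.Adj]

theorem vertexEnergy_eq_abs_adjMatrix (j : Fin n) :
    vertexEnergy G j = CFC.abs (G.adjMatrix ℝ) j j := by
  have hA : (G.adjMatrix ℝ)ᴴ = G.adjMatrix ℝ := by
    rw [conjTranspose_eq_transpose_of_trivial, transpose_adjMatrix]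
  calc vertexEnergy G j
      = (posSemidef_self_mul_conjTranspose (G.adjMatrix ℝ)).1.cfc Real.sqrt j j := rfl
    _ = CFC.abs (G.adjMatrix ℝ) j j := by
      rw [(posSemidef_self_mul_conjTranspose _).cfc_sqrt_eq, CFC.abs, star_eq_conjTranspose, hA]

theorem abs_adjMatrix_sq : CFC.abs (G.adjMatrix ℝ) ^ 2 = G.adjMatrix ℝ ^ 2 := by
  rw [CFC.abs_sq, star_eq_conjTranspose, conjTranspose_eq_transpose_of_trivial,
    transpose_adjMatrix, sq]

end SimpleGraph

theorem stmt_5_general {n : ℕ} (G : SimpleGraph (Fin n)) [DecidableRel G.Adj]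
    (j : Fin n) :
    ((G.degree j : ℝ) ^ ((3 : ℝ) / 2)) / Real.sqrt ((G.adjMatrix ℝ ^ 4) j j) ≤
      vertexEnergy G j := by
  set B := CFC.abs (G.adjMatrix ℝ)
  have hB : B.PosSemidef := (CFC.abs_nonneg _).posSemidef
  have hdeg : (B ^ 2) j j = G.degree j := by
    rw [G.abs_adjMatrix_sq, sq, G.adjMatrix_mul_self_apply_self]
  have hwalks : B ^ 4 = G.adjMatrix ℝ ^ 4 := by
    rw [show 4 = 2 * 2 from rfl, pow_mul, pow_mul, G.abs_adjMatrix_sq]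
  rw [G.vertexEnergy_eq_abs_adjMatrix, ← hwalks, ← hdeg]
  exact Real.rpow_three_halves_div_sqrt_le (hB.pow 2).diag_nonneg hB.diag_nonneg
    (hB.pow_two_apply_self_cube_le j)

theorem stmt_5 {n : ℕ} (G : SimpleGraph (Fin n)) [DecidableRel G.Adj]
    (j : Fin n) (hd : 1 ≤ G.degree j) :
    ((G.degree j : ℝ) ^ ((3 : ℝ) / 2)) / Real.sqrt ((G.adjMatrix ℝ ^ 4) j j) ≤
      vertexEnergy G j :=
  stmt_5_general G j
end

section
/- Every finite simple d-regular graph with d ≥ 1 is completely non-hypoenergetic: E_G(v_i) ≥ 1 for every vertex v_i. -/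
open Matrix Finset

/-!
Write `A Aᴴ = A² = ∑ₖ μₖ uₖ uₖᴴ` with orthonormal eigenvectors `uₖ` and weights
`wₖ = |uₖ(i)|² ≥ 0`. Then `E_G(vᵢ) = ∑ₖ √μₖ wₖ`, while `(A²)ᵢᵢ = deg vᵢ = d = ∑ₖ μₖ wₖ`.
Cauchy–Schwarz over each neighbourhood gives `‖A v‖² ≤ d² ‖v‖²` for a `d`-regular graph, so
`0 ≤ μₖ ≤ d²`, hence `μₖ ≤ d √μₖ` and `d ≤ d · E_G(vᵢ)`.
-/

namespace Matrix

lemma mul_diagonal_mul_star_apply_self {𝕜 n : Type*} [RCLike 𝕜] [Fintype n] [DecidableEq n]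
    (U : Matrix n n 𝕜) (g : n → ℝ) (i : n) :
    (U * diagonal (RCLike.ofReal ∘ g : n → 𝕜) * star U) i i =
      ∑ k, ((g k * ‖U i k‖ ^ 2 : ℝ) : 𝕜) := by
  simp only [mul_apply, diagonal_apply, mul_ite, mul_zero, Finset.sum_ite_eq', Finset.mem_univ,
    if_true, star_apply, Function.comp_apply]
  refine Finset.sum_congr rfl fun k _ => ?_
  rw [RCLike.star_def, mul_right_comm, RCLike.mul_conj]
  push_cast
  ring

namespace IsHermitian

variable {𝕜 n : Type*} [RCLike 𝕜] [Fintype n] [DecidableEq n] {A : Matrix n n 𝕜}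

lemma cfc_apply_self (hA : A.IsHermitian) (f : ℝ → ℝ) (i : n) :
    hA.cfc f i i = ∑ k, ((f (hA.eigenvalues k) * ‖hA.eigenvectorBasis k i‖ ^ 2 : ℝ) : 𝕜) :=
  mul_diagonal_mul_star_apply_self (𝕜 := 𝕜) _ (f ∘ hA.eigenvalues) i

lemma apply_self_eq_sum_eigenvalues (hA : A.IsHermitian) (i : n) :
    A i i = ∑ k, ((hA.eigenvalues k * ‖hA.eigenvectorBasis k i‖ ^ 2 : ℝ) : 𝕜) := by
  conv_lhs => rw [hA.spectral_theorem]
  exact hA.cfc_apply_self id i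

lemma eigenvalues_le_of_forall_dotProduct_mulVec_le {A : Matrix n n ℝ} (hA : A.IsHermitian)
    {c : ℝ} (h : ∀ v, v ⬝ᵥ A *ᵥ v ≤ c * (v ⬝ᵥ v)) (k : n) : hA.eigenvalues k ≤ c := by
  have hunit : hA.eigenvectorBasis k ⬝ᵥ hA.eigenvectorBasis k = 1 := by
    have := real_inner_self_eq_norm_sq (hA.eigenvectorBasis k)
    rwa [EuclideanSpace.inner_eq_star_dotProduct, hA.eigenvectorBasis.orthonormal.1 k, one_pow,
      star_trivial] at this
  simpa [hA.eigenvalues_eq k, hunit] using h (hA.eigenvectorBasis k)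

end IsHermitian

end Matrix

namespace SimpleGraph

variable {V : Type*} {G : SimpleGraph V} [DecidableRel G.Adj]

lemma conjTranspose_adjMatrix {α : Type*} [NonAssocSemiring α] [StarRing α] :
    (G.adjMatrix α)ᴴ = G.adjMatrix α := by
  ext i j
  simp only [conjTranspose_apply, adjMatrix_apply, G.adj_comm]
  split_ifs <;> simp

variable [Fintype V]

lemma sum_sum_neighborFinset {M : Type*} [AddCommMonoid M] (f : V → M) :
    ∑ j, ∑ u ∈ G.neighborFinset j, f u = ∑ u, G.degree u • f u := by
  classical
  simp_rw [← card_neighborFinset_eq_degree, ← Finset.sum_const, neighborFinset_eq_filter,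
    Finset.sum_filter]
  rw [Finset.sum_comm]
  simp_rw [G.adj_comm]

variable {d : ℕ}

lemma IsRegularOfDegree.dotProduct_adjMatrix_mulVec_le (hG : G.IsRegularOfDegree d)
    (v : V → ℝ) : G.adjMatrix ℝ *ᵥ v ⬝ᵥ G.adjMatrix ℝ *ᵥ v ≤ d ^ 2 * (v ⬝ᵥ v) := by
  have hcard : ∀ j, (#(G.neighborFinset j) : ℝ) = d := fun j => by
    rw [card_neighborFinset_eq_degree, hG j]
  calc G.adjMatrix ℝ *ᵥ v ⬝ᵥ G.adjMatrix ℝ *ᵥ v = ∑ j, (∑ u ∈ G.neighborFinset j, v u) ^ 2 := by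
        simp only [dotProduct, adjMatrix_mulVec_apply, sq]
    _ ≤ ∑ j, d * ∑ u ∈ G.neighborFinset j, v u ^ 2 := by
        gcongr with j
        exact hcard j ▸ sq_sum_le_card_mul_sum_sq
    _ = d ^ 2 * (v ⬝ᵥ v) := by
        rw [← Finset.mul_sum, sum_sum_neighborFinset]
        simp only [hG _, nsmul_eq_mul, ← Finset.mul_sum, dotProduct, sq]
        ring

lemma IsRegularOfDegree.eigenvalues_adjMatrix_mul_conjTranspose_le [DecidableEq V]
    (hG : G.IsRegularOfDegree d) (hM : (G.adjMatrix ℝ * (G.adjMatrix ℝ)ᴴ).IsHermitian) (k : V) :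
    hM.eigenvalues k ≤ d ^ 2 :=
  hM.eigenvalues_le_of_forall_dotProduct_mulVec_le (fun v => by
    rw [conjTranspose_adjMatrix, ← mulVec_mulVec, dotProduct_mulVec, ← mulVec_transpose,
      transpose_adjMatrix]
    exact hG.dotProduct_adjMatrix_mulVec_le v) k

lemma IsRegularOfDegree.adjMatrix_mul_conjTranspose_apply_self (hG : G.IsRegularOfDegree d)
    (i : V) : (G.adjMatrix ℝ * (G.adjMatrix ℝ)ᴴ) i i = d := by
  rw [conjTranspose_adjMatrix, adjMatrix_mul_self_apply_self, hG i]

end SimpleGraph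

lemma sum_mul_le_mul_sum_sqrt_mul {ι : Type*} (s : Finset ι) {μ w : ι → ℝ} {c : ℝ} (hc : 0 ≤ c)
    (hμ : ∀ k, 0 ≤ μ k ∧ μ k ≤ c ^ 2) (hw : ∀ k, 0 ≤ w k) :
    ∑ k ∈ s, μ k * w k ≤ c * ∑ k ∈ s, √(μ k) * w k := by
  rw [Finset.mul_sum]
  refine Finset.sum_le_sum fun k _ => ?_
  have hsqrt : √(μ k) ≤ c := Real.sqrt_le_iff.mpr ⟨hc, (hμ k).2⟩
  calc μ k * w k = √(μ k) * √(μ k) * w k := by rw [Real.mul_self_sqrt (hμ k).1]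
    _ ≤ c * (√(μ k) * w k) := by
        rw [mul_assoc]
        exact mul_le_mul_of_nonneg_right hsqrt (mul_nonneg (Real.sqrt_nonneg _) (hw k))

theorem stmt_14 {n : ℕ} (G : SimpleGraph (Fin n)) [DecidableRel G.Adj]
    (d : ℕ) (hreg : G.IsRegularOfDegree d) (hd : 1 ≤ d) :
    ∀ i : Fin n, 1 ≤ vertexEnergy G i := by
  intro i
  have hPSD := posSemidef_self_mul_conjTranspose (G.adjMatrix ℝ)
  set μ := hPSD.1.eigenvalues
  set w : Fin n → ℝ := fun k => ‖hPSD.1.eigenvectorBasis k i‖ ^ 2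
  have hμ : ∀ k, 0 ≤ μ k ∧ μ k ≤ (d : ℝ) ^ 2 := fun k =>
    ⟨hPSD.eigenvalues_nonneg k, hreg.eigenvalues_adjMatrix_mul_conjTranspose_le hPSD.1 k⟩
  have hdeg : (d : ℝ) = ∑ k, μ k * w k :=
    (hreg.adjMatrix_mul_conjTranspose_apply_self i).symm.trans
      (hPSD.1.apply_self_eq_sum_eigenvalues i)
  have henergy : vertexEnergy G i = ∑ k, √(μ k) * w k := hPSD.1.cfc_apply_self Real.sqrt i
  refine le_of_mul_le_mul_left ?_ (by exact_mod_cast hd : (0 : ℝ) < d)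
  calc (d : ℝ) * 1 = ∑ k, μ k * w k := by rw [mul_one, hdeg]
    _ ≤ d * ∑ k, √(μ k) * w k :=
        sum_mul_le_mul_sum_sqrt_mul _ d.cast_nonneg hμ fun k => by positivity
    _ = d * vertexEnergy G i := by rw [henergy]
end

section
/- Let G be a finite simple connected graph on n ≥ 2 vertices with adjacency matrix A, eigenvalues λ_1 ≥ λ_2 ≥ … ≥ λ_n, and let U = (u_{ij}) be an orthogonal matrix whose j-th column is a unit eigenvector of A for λ_j; set p_{ij} = u_{ij}^2. Then for every vertex v_i of degree d_i, E_G(v_i) ≤ p_{i1}|λ_1| + √((d_i − p_{i1}λ_1^2)(1 − p_{i1})). -/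
/-!
Because the columns of `U` are orthonormal eigenvectors, `A = U diag(λ) Uᵀ` and
`|A| = U diag(|λ_j|) Uᵀ`, so `E_G(v_i) = ∑_j p_{ij} |λ_j|`. The same diagonalisation gives
`∑_j p_{ij} = (U Uᵀ)_{ii} = 1` and `∑_j p_{ij} λ_j² = (A²)_{ii} = d_i`. Splitting off `j = 1` and
bounding the remaining sum by the Cauchy–Schwarz inequality with weights `p_{ij}` gives the claim.
-/

open Matrix Finset

lemma Finset.sum_mul_abs_le_sqrt {ι : Type*} (s : Finset ι) (p x : ι → ℝ)
    (hp : ∀ j ∈ s, 0 ≤ p j) :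
    ∑ j ∈ s, p j * |x j| ≤ √((∑ j ∈ s, p j * x j ^ 2) * ∑ j ∈ s, p j) :=
  Real.le_sqrt_of_sq_le <| sum_sq_le_sum_mul_sum_of_sq_le_mul s
    (fun j hj => mul_nonneg (hp j hj) (sq_nonneg _)) hp
    fun j _ => le_of_eq (by rw [mul_pow, sq_abs]; ring)

lemma Finset.sum_mul_abs_le_add_sqrt {ι : Type*} [Fintype ι] [DecidableEq ι] (p x : ι → ℝ)
    (hp : ∀ j, 0 ≤ p j) (hp1 : ∑ j, p j = 1) {d : ℝ} (hd : ∑ j, p j * x j ^ 2 = d) (z : ι) :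
    ∑ j, p j * |x j| ≤ p z * |x z| + √((d - p z * x z ^ 2) * (1 - p z)) := by
  rw [← add_sum_erase _ _ (mem_univ z)] at hp1 hd ⊢
  rw [← hd, ← hp1, add_sub_cancel_left, add_sub_cancel_left]
  gcongr
  exact (univ.erase z).sum_mul_abs_le_sqrt p x fun j _ => hp j

section Orthogonal

variable {ι R : Type*} [Fintype ι] [DecidableEq ι] [CommSemiring R]

lemma Matrix.eq_mul_diagonal_mul_transpose {A U : Matrix ι ι R} {lam : ι → R}
    (hU : U * Uᵀ = 1) (hEig : ∀ j, A *ᵥ (fun i => U i j) = lam j • (fun i => U i j)) :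
    A = U * diagonal lam * Uᵀ := by
  have hAU : A * U = U * diagonal lam := by
    ext a b
    rw [mul_apply, mul_diagonal]
    simpa [mulVec, dotProduct, mul_comm] using congr_fun (hEig b) a
  rw [← hAU, Matrix.mul_assoc, hU, Matrix.mul_one]

lemma Matrix.conj_diagonal_mul_conj_diagonal {U : Matrix ι ι R} (hU : Uᵀ * U = 1)
    (d e : ι → R) :
    U * diagonal d * Uᵀ * (U * diagonal e * Uᵀ) = U * diagonal (fun j => d j * e j) * Uᵀ := by
  simp only [Matrix.mul_assoc]
  rw [← Matrix.mul_assoc Uᵀ U, hU, Matrix.one_mul,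
    ← Matrix.mul_assoc (diagonal d), diagonal_mul_diagonal']

lemma Matrix.conj_diagonal_apply_self (U : Matrix ι ι R) (d : ι → R) (i : ι) :
    (U * diagonal d * Uᵀ) i i = ∑ j, U i j ^ 2 * d j := by
  rw [mul_apply]
  exact sum_congr rfl fun j _ => by rw [mul_diagonal, transpose_apply]; ring

end Orthogonal

open scoped MatrixOrder in
lemma Matrix.PosSemidef.eigenvectorUnitary_mul_diagonal_sqrt_mul_star {ι : Type*} [Fintype ι]
    [DecidableEq ι] {M : Matrix ι ι ℝ} (hM : M.PosSemidef) :
    (hM.1.eigenvectorUnitary : Matrix ι ι ℝ) *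
      diagonal ((RCLike.ofReal : ℝ → ℝ) ∘ (√·) ∘ hM.1.eigenvalues) *
      (star hM.1.eigenvectorUnitary : Matrix ι ι ℝ) = CFC.sqrt M := by
  rw [CFC.sqrt_eq_cfc, cfc_nnreal_eq_real _ _ hM.nonneg, hM.1.cfc_eq, IsHermitian.cfc,
    Unitary.conjStarAlgAut_apply]
  simp only [Real.sqrt]

open scoped MatrixOrder in
lemma vertexEnergy_eq_apply_of_mul_self_eq {n : ℕ} (G : SimpleGraph (Fin n)) [DecidableRel G.Adj]
    {B : Matrix (Fin n) (Fin n) ℝ} (hB : B.PosSemidef)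
    (hsq : B * B = G.adjMatrix ℝ * (G.adjMatrix ℝ)ᴴ) (i : Fin n) :
    vertexEnergy G i = B i i := by
  rw [vertexEnergy,
    (posSemidef_self_mul_conjTranspose _).eigenvectorUnitary_mul_diagonal_sqrt_mul_star,
    CFC.sqrt_unique hsq hB.nonneg]

theorem stmt_18 {n : ℕ} (hn : 2 ≤ n) (G : SimpleGraph (Fin n)) [DecidableRel G.Adj]
    (lam : Fin n → ℝ)
    (U : Matrix (Fin n) (Fin n) ℝ) (hU : U ∈ Matrix.orthogonalGroup (Fin n) ℝ)
    (hEig : ∀ j, (G.adjMatrix ℝ) *ᵥ (fun i => U i j) = lam j • (fun i => U i j))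
    (i : Fin n) :
    vertexEnergy G i ≤
      (U i ⟨0, by omega⟩) ^ 2 * |lam ⟨0, by omega⟩| +
        Real.sqrt (((G.degree i : ℝ) - (U i ⟨0, by omega⟩) ^ 2 * (lam ⟨0, by omega⟩) ^ 2) *
          (1 - (U i ⟨0, by omega⟩) ^ 2)) := by
  have hUUt : U * Uᵀ = 1 := (mem_orthogonalGroup_iff _ _).mp hU
  have hUU : Uᵀ * U = 1 := (mem_orthogonalGroup_iff' _ _).mp hU
  have hA : G.adjMatrix ℝ = U * diagonal lam * Uᵀ := eq_mul_diagonal_mul_transpose hUUt hEig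
  have hAA : G.adjMatrix ℝ * (G.adjMatrix ℝ)ᴴ = U * diagonal (fun j => lam j ^ 2) * Uᵀ := by
    rw [conjTranspose_eq_transpose_of_trivial, G.transpose_adjMatrix, hA,
      conj_diagonal_mul_conj_diagonal hUU]
    simp only [sq]
  have hB : (U * diagonal (fun j => |lam j|) * Uᵀ).PosSemidef := by
    simpa using
      (posSemidef_diagonal_iff.mpr fun j => abs_nonneg (lam j)).mul_mul_conjTranspose_same U
  have hBB : U * diagonal (fun j => |lam j|) * Uᵀ * (U * diagonal (fun j => |lam j|) * Uᵀ) =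
      G.adjMatrix ℝ * (G.adjMatrix ℝ)ᴴ := by
    rw [conj_diagonal_mul_conj_diagonal hUU, hAA]
    simp only [abs_mul_abs_self, sq]
  have hdeg : ∑ j, U i j ^ 2 * lam j ^ 2 = G.degree i := by
    rw [← conj_diagonal_apply_self, ← hAA, conjTranspose_eq_transpose_of_trivial,
      G.transpose_adjMatrix]
    exact G.adjMatrix_mul_self_apply_self i
  have hrow : ∑ j, U i j ^ 2 = 1 := by
    simpa [mul_apply, sq] using congr_fun₂ hUUt i i
  rw [vertexEnergy_eq_apply_of_mul_self_eq G hB hBB, conj_diagonal_apply_self]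
  exact sum_mul_abs_le_add_sqrt (fun j => U i j ^ 2) lam (fun j => sq_nonneg _) hrow hdeg _
end
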